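/- (Lagrange multipliers for equality constraints in non-smooth optimization) Let U and Z be Banach spaces, let F : U → ℝ be locally Lipschitz at u₀ ∈ U, and let G : U → Z be a Fréchet differentiable map such that G'(u₀) maps U onto Z. Assume there exist α > 0 and K > 0 such that ‖G'(u₀ + φ) − G'(u₀)‖ ≤ K‖φ‖ whenever ‖φ‖ < α. If u₀ is a local minimum of F subject to the constraint G(u) = 0 (i.e., G(u₀) = 0 and there is δ > 0 with F(u) ≥ F(u₀) for all u ∈ B_δ(u₀) with G(u) = 0), then there exist u* ∈ ∂⁰F(u₀) and z₀* ∈ Z* such that u* + (G'(u₀))*(z₀*) = 0, equivalently ⟨φ, u*⟩ + ⟨G'(u₀)φ, z₀*⟩ = 0 for all φ ∈ U. -/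

import Mathlib

open Filter Topology Metric

/-- The generalized directional derivative `H_u(φ)` of `F` at `u` in direction `φ`:
the supremum, over all sequences `uₙ → u` in `U` and `tₙ → 0⁺` in `ℝ`, of
`limsup_{n → ∞} (F (uₙ + tₙ φ) - F uₙ) / tₙ`. -/
noncomputable def genDirDeriv {U : Type*} [NormedAddCommGroup U] [NormedSpace ℝ U]
    (F : U → ℝ) (u : U) (φ : U) : ℝ :=
  sSup { L : ℝ | ∃ (un : ℕ → U) (tn : ℕ → ℝ),
    (∀ n, 0 < tn n) ∧
    Tendsto un atTop (𝓝 u) ∧ Tendsto tn atTop (𝓝 0) ∧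
    L = limsup (fun n => (F (un n + tn n • φ) - F (un n)) / tn n) atTop }

/-- `F` is locally Lipschitz at `u`: there are `r > 0` and `K > 0` with
`|F v - F w| ≤ K ‖v - w‖` for all `v, w` in the ball `B_r(u)`. -/
def LocallyLipschitzAtPt {U : Type*} [NormedAddCommGroup U] (F : U → ℝ) (u : U) : Prop :=
  ∃ r > (0 : ℝ), ∃ K > (0 : ℝ),
    ∀ v ∈ ball u r, ∀ w ∈ ball u r, |F v - F w| ≤ K * ‖v - w‖

/-!
The generalized directional derivative `H = genDirDeriv F u₀` is sublinear and bounded by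
`K ‖·‖`. Continuity of `G'` at `u₀` makes `G` strictly differentiable there, so by the
Lyusternik–Graves theorem every `φ ∈ ker G'(u₀)` is a tangent direction of `{G = 0}`: there are
feasible `wₙ = u₀ + tₙ φ + o(tₙ)`. Along `uₙ = wₙ - tₙ φ → u₀` local minimality and the Lipschitz
bound give difference quotients `≥ -o(1)`, hence `H ≥ 0` on the kernel. Hahn–Banach extends `0` on
the kernel to a continuous `u* ≤ H`; it vanishes on `ker G'(u₀)`, so by the open mapping theorem it
factors as `-z₀* ∘ G'(u₀)`.
-/

section DiffQuot

variable {U : Type*} [NormedAddCommGroup U] [NormedSpace ℝ U] {F : U → ℝ} {u₀ φ : U}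

noncomputable def diffQuot (F : U → ℝ) (φ u : U) (t : ℝ) : ℝ := (F (u + t • φ) - F u) / t

theorem diffQuot_add (F : U → ℝ) (φ ψ u : U) (t : ℝ) :
    diffQuot F (φ + ψ) u t = diffQuot F φ (u + t • ψ) t + diffQuot F ψ u t := by
  have h : u + t • (φ + ψ) = u + t • ψ + t • φ := by rw [smul_add]; abel
  simp only [diffQuot, h]
  ring

theorem diffQuot_smul (F : U → ℝ) (φ u : U) (c t : ℝ) :
    diffQuot F (c • φ) u t = c * diffQuot F φ u (c * t) := by
  rcases eq_or_ne c 0 with rfl | hc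
  · simp [diffQuot]
  rw [diffQuot, diffQuot, smul_smul, mul_comm t c, mul_div_assoc', mul_div_mul_left _ _ hc]

theorem abs_diffQuot_le {r K : ℝ}
    (hK : ∀ v ∈ ball u₀ r, ∀ w ∈ ball u₀ r, |F v - F w| ≤ K * ‖v - w‖)
    {u : U} {t : ℝ} (ht : 0 < t) (hu : u ∈ ball u₀ r) (hut : u + t • φ ∈ ball u₀ r) :
    |diffQuot F φ u t| ≤ K * ‖φ‖ := by
  rw [diffQuot, abs_div, abs_of_pos ht, div_le_iff₀ ht]
  calc |F (u + t • φ) - F u| ≤ K * ‖u + t • φ - u‖ := hK _ hut _ hu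
    _ = K * ‖φ‖ * t := by rw [add_sub_cancel_left, norm_smul, Real.norm_of_nonneg ht.le]; ring

variable {u : ℕ → U} {t : ℕ → ℝ}

theorem eventually_abs_diffQuot_le {r K : ℝ} (hr : 0 < r)
    (hK : ∀ v ∈ ball u₀ r, ∀ w ∈ ball u₀ r, |F v - F w| ≤ K * ‖v - w‖)
    (ht0 : ∀ n, 0 < t n) (hu : Tendsto u atTop (𝓝 u₀)) (ht : Tendsto t atTop (𝓝 0)) :
    ∀ᶠ n in atTop, |diffQuot F φ (u n) (t n)| ≤ K * ‖φ‖ := by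
  have hut : Tendsto (fun n => u n + t n • φ) atTop (𝓝 u₀) := by
    simpa using hu.add (ht.smul_const φ)
  filter_upwards [hu (ball_mem_nhds u₀ hr), hut (ball_mem_nhds u₀ hr)] with n h h'
  exact abs_diffQuot_le hK (ht0 n) h h'

theorem limsup_diffQuot_le {r K : ℝ} (hr : 0 < r)
    (hK : ∀ v ∈ ball u₀ r, ∀ w ∈ ball u₀ r, |F v - F w| ≤ K * ‖v - w‖)
    (ht0 : ∀ n, 0 < t n) (hu : Tendsto u atTop (𝓝 u₀)) (ht : Tendsto t atTop (𝓝 0)) :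
    limsup (fun n => diffQuot F φ (u n) (t n)) atTop ≤ K * ‖φ‖ := by
  have h := eventually_abs_diffQuot_le (φ := φ) hr hK ht0 hu ht
  have hge := isBoundedUnder_of_eventually_ge (h.mono fun n hn => (abs_le.1 hn).1)
  exact limsup_le_of_le hge.isCoboundedUnder_le (h.mono fun n hn => (abs_le.1 hn).2)

theorem LocallyLipschitzAtPt.isBoundedUnder_abs_diffQuot (hF : LocallyLipschitzAtPt F u₀)
    (ht0 : ∀ n, 0 < t n) (hu : Tendsto u atTop (𝓝 u₀)) (ht : Tendsto t atTop (𝓝 0)) :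
    IsBoundedUnder (· ≤ ·) atTop (fun n => |diffQuot F φ (u n) (t n)|) := by
  obtain ⟨r, hr, K, -, hK⟩ := hF
  exact isBoundedUnder_of_eventually_le (eventually_abs_diffQuot_le hr hK ht0 hu ht)

theorem genDirDeriv_le {b : ℝ}
    (h : ∀ (u : ℕ → U) (t : ℕ → ℝ), (∀ n, 0 < t n) → Tendsto u atTop (𝓝 u₀) →
      Tendsto t atTop (𝓝 0) → limsup (fun n => diffQuot F φ (u n) (t n)) atTop ≤ b) :
    genDirDeriv F u₀ φ ≤ b := by
  refine csSup_le ⟨_, fun _ => u₀, fun n => 1 / ((n : ℝ) + 1), fun n => by positivity,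
    tendsto_const_nhds, tendsto_one_div_add_atTop_nhds_zero_nat, rfl⟩ ?_
  rintro _ ⟨u, t, ht0, hu, ht, rfl⟩
  exact h u t ht0 hu ht

theorem LocallyLipschitzAtPt.le_genDirDeriv (hF : LocallyLipschitzAtPt F u₀)
    (ht0 : ∀ n, 0 < t n) (hu : Tendsto u atTop (𝓝 u₀)) (ht : Tendsto t atTop (𝓝 0)) :
    limsup (fun n => diffQuot F φ (u n) (t n)) atTop ≤ genDirDeriv F u₀ φ := by
  obtain ⟨r, hr, K, -, hK⟩ := hF
  refine le_csSup ⟨K * ‖φ‖, ?_⟩ ⟨u, t, ht0, hu, ht, rfl⟩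
  rintro _ ⟨u, t, ht0, hu, ht, rfl⟩
  exact limsup_diffQuot_le hr hK ht0 hu ht

theorem LocallyLipschitzAtPt.exists_genDirDeriv_le (hF : LocallyLipschitzAtPt F u₀) :
    ∃ K, ∀ φ, genDirDeriv F u₀ φ ≤ K * ‖φ‖ := by
  obtain ⟨r, hr, K, -, hK⟩ := hF
  exact ⟨K, fun φ => genDirDeriv_le fun u t ht0 hu ht => limsup_diffQuot_le hr hK ht0 hu ht⟩

theorem LocallyLipschitzAtPt.genDirDeriv_add_le (hF : LocallyLipschitzAtPt F u₀) (φ ψ : U) :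
    genDirDeriv F u₀ (φ + ψ) ≤ genDirDeriv F u₀ φ + genDirDeriv F u₀ ψ := by
  refine genDirDeriv_le fun u t ht0 hu ht => ?_
  have hv : Tendsto (fun n => u n + t n • ψ) atTop (𝓝 u₀) := by
    simpa using hu.add (ht.smul_const ψ)
  have hφ := isBoundedUnder_le_abs.1 (hF.isBoundedUnder_abs_diffQuot (φ := φ) ht0 hv ht)
  have hψ := isBoundedUnder_le_abs.1 (hF.isBoundedUnder_abs_diffQuot (φ := ψ) ht0 hu ht)
  simp only [diffQuot_add]
  exact (limsup_add_le hφ.2 hφ.1 hψ.2.isCoboundedUnder_le hψ.1).trans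
    (add_le_add (hF.le_genDirDeriv ht0 hv ht) (hF.le_genDirDeriv ht0 hu ht))

theorem LocallyLipschitzAtPt.genDirDeriv_smul_le (hF : LocallyLipschitzAtPt F u₀) {c : ℝ}
    (hc : 0 < c) (φ : U) : genDirDeriv F u₀ (c • φ) ≤ c * genDirDeriv F u₀ φ := by
  refine genDirDeriv_le fun u t ht0 hu ht => ?_
  have hct0 : ∀ n, 0 < c * t n := fun n => mul_pos hc (ht0 n)
  have hct : Tendsto (fun n => c * t n) atTop (𝓝 0) := by simpa using ht.const_mul c
  have hφ := isBoundedUnder_le_abs.1 (hF.isBoundedUnder_abs_diffQuot (φ := φ) hct0 hu hct)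
  simp only [diffQuot_smul F φ _ c]
  calc limsup (fun n => c * diffQuot F φ (u n) (c * t n)) atTop
      = c * limsup (fun n => diffQuot F φ (u n) (c * t n)) atTop :=
        (Monotone.map_limsup_of_continuousAt (f := (c * ·)) (monotone_mul_left_of_nonneg hc.le) _
          (by fun_prop) hφ.1 hφ.2.isCoboundedUnder_le).symm
    _ ≤ c * genDirDeriv F u₀ φ := by gcongr; exact hF.le_genDirDeriv hct0 hu hct

theorem LocallyLipschitzAtPt.genDirDeriv_smul (hF : LocallyLipschitzAtPt F u₀) {c : ℝ}
    (hc : 0 < c) (φ : U) : genDirDeriv F u₀ (c • φ) = c * genDirDeriv F u₀ φ := by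
  refine le_antisymm (hF.genDirDeriv_smul_le hc φ) ?_
  have h := hF.genDirDeriv_smul_le (inv_pos.2 hc) (c • φ)
  rw [smul_smul, inv_mul_cancel₀ hc.ne', one_smul] at h
  calc c * genDirDeriv F u₀ φ ≤ c * (c⁻¹ * genDirDeriv F u₀ (c • φ)) := by gcongr
    _ = genDirDeriv F u₀ (c • φ) := by field_simp

end DiffQuot

section Tangent

variable {U : Type*} [NormedAddCommGroup U] [NormedSpace ℝ U]

-- Mathlib's `posTangentConeAt` is indexed by an arbitrary filter, while `genDirDeriv` only
-- sees `ℕ`-indexed sequences with positive steps.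
def seqTangentCone (S : Set U) (x : U) : Set U :=
  {φ | ∃ (t : ℕ → ℝ) (w : ℕ → U), (∀ n, 0 < t n) ∧ Tendsto t atTop (𝓝 0) ∧
    (∀ᶠ n in atTop, w n ∈ S) ∧ Tendsto (fun n => (t n)⁻¹ • (w n - x)) atTop (𝓝 φ)}

theorem LocallyLipschitzAtPt.genDirDeriv_nonneg_of_isLocalMinOn {F : U → ℝ} {u₀ φ : U}
    {S : Set U} (hF : LocallyLipschitzAtPt F u₀) (hmin : IsLocalMinOn F S u₀)
    (hφ : φ ∈ seqTangentCone S u₀) : 0 ≤ genDirDeriv F u₀ φ := by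
  obtain ⟨t, w, ht0, ht, hwS, hw⟩ := hφ
  obtain ⟨r, hr, K, -, hK⟩ := id hF
  set u : ℕ → U := fun n => w n - t n • φ
  set e : ℕ → ℝ := fun n => ‖(t n)⁻¹ • (w n - u₀) - φ‖
  have he : Tendsto e atTop (𝓝 0) := by simpa using (hw.sub_const φ).norm
  have hu_sub : ∀ n, u n - u₀ = t n • ((t n)⁻¹ • (w n - u₀) - φ) := fun n => by
    rw [smul_sub, smul_smul, mul_inv_cancel₀ (ht0 n).ne', one_smul, sub_right_comm]
  have hu : Tendsto u atTop (𝓝 u₀) := by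
    rw [← tendsto_sub_nhds_zero_iff]
    simpa [hu_sub] using ht.smul (hw.sub_const φ)
  have hw_eq : ∀ n, u n + t n • φ = w n := fun n => sub_add_cancel _ _
  have hwlim : Tendsto w atTop (𝓝[S] u₀) := by
    refine tendsto_nhdsWithin_iff.2 ⟨?_, hwS⟩
    simpa [hw_eq] using hu.add (ht.smul_const φ)
  -- `F (w n) ≥ F u₀` by minimality and `F u₀ - F (u n) ≥ -K ‖u n - u₀‖ = -K t n e n`.
  have hlow : ∀ᶠ n in atTop, -K * e n ≤ diffQuot F φ (u n) (t n) := by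
    filter_upwards [hwlim.eventually hmin, hu (ball_mem_nhds u₀ hr)] with n hFw hun
    have hLip := (abs_le.1 (hK u₀ (mem_ball_self hr) (u n) hun)).1
    have hdist : ‖u₀ - u n‖ = t n * e n := by
      rw [norm_sub_rev, hu_sub, norm_smul, Real.norm_of_nonneg (ht0 n).le]
    rw [hdist] at hLip
    rw [diffQuot, hw_eq, le_div_iff₀ (ht0 n)]
    linarith
  have hbdd := isBoundedUnder_le_abs.1 (hF.isBoundedUnder_abs_diffQuot (φ := φ) ht0 hu ht)
  calc (0 : ℝ) = limsup (fun n => -K * e n) atTop := by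
        simpa using ((he.const_mul (-K)).limsup_eq).symm
    _ ≤ limsup (fun n => diffQuot F φ (u n) (t n)) atTop :=
        limsup_le_limsup hlow (he.const_mul (-K)).isBoundedUnder_ge.isCoboundedUnder_le hbdd.1
    _ ≤ genDirDeriv F u₀ φ := hF.le_genDirDeriv ht0 hu ht

end Tangent

section Lyusternik

variable {U : Type*} [NormedAddCommGroup U] [NormedSpace ℝ U] [CompleteSpace U]
  {Z : Type*} [NormedAddCommGroup Z] [NormedSpace ℝ Z] [CompleteSpace Z]
  {G : U → Z} {M : U →L[ℝ] Z} {u₀ : U}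

theorem HasStrictFDerivAt.exists_eventually_exists_preimage_norm_sub_le
    (hG : HasStrictFDerivAt G M u₀) (hM : Function.Surjective M) :
    ∃ C, ∀ᶠ v in 𝓝 u₀, ∃ w, G w = G u₀ ∧ ‖w - v‖ ≤ C * ‖G v - G u₀‖ := by
  set Minv := M.nonlinearRightInverseOfSurjective (LinearMap.range_eq_top.2 hM)
  have hN : 0 < Minv.nnnorm := M.nonlinearRightInverseOfSurjective_nnnorm_pos _
  obtain ⟨s, hs, hGs⟩ := hG.approximates_deriv_on_nhds (Or.inr (half_pos (inv_pos.2 hN)))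
  obtain ⟨ε, hε, hball⟩ := Metric.mem_nhds_iff.1 hs
  have hsmall : ∀ᶠ v in 𝓝 u₀, 2 * (Minv.nnnorm : ℝ) * ‖G v - G u₀‖ < ε / 2 := by
    have h := (hG.continuousAt.sub_const (G u₀)).norm.const_mul (2 * (Minv.nnnorm : ℝ))
    simp only [sub_self, norm_zero, mul_zero] at h
    exact h.eventually_lt_const (half_pos hε)
  refine ⟨2 * (Minv.nnnorm : ℝ), ?_⟩
  filter_upwards [ball_mem_nhds u₀ (half_pos hε), hsmall] with v hv hGv
  have hsub : closedBall v (2 * (Minv.nnnorm : ℝ) * ‖G v - G u₀‖) ⊆ s := fun w hw => hball <| by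
    rw [mem_ball] at hv ⊢
    rw [mem_closedBall] at hw
    linarith [dist_triangle w v u₀]
  -- Graves with `c = ‖Minv‖⁻¹ / 2`: the image of `closedBall v (2 ‖Minv‖ ‖G v - G u₀‖)` covers
  -- the closed ball of radius `‖G v - G u₀‖` around `G v`.
  have hGu₀ : G u₀ ∈ closedBall (G v) (((Minv.nnnorm : ℝ)⁻¹ - (Minv.nnnorm⁻¹ / 2 : NNReal)) *
      (2 * (Minv.nnnorm : ℝ) * ‖G v - G u₀‖)) := by
    have hN' : (Minv.nnnorm : ℝ) ≠ 0 := by positivity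
    rw [mem_closedBall, dist_comm, dist_eq_norm]
    push_cast
    field_simp
    norm_num
  obtain ⟨w, hw, hGw⟩ :=
    hGs.surjOn_closedBall_of_nonlinearRightInverse Minv (by positivity) hsub hGu₀
  exact ⟨w, hGw, by rwa [mem_closedBall, dist_eq_norm] at hw⟩

theorem HasStrictFDerivAt.mem_seqTangentCone_preimage (hG : HasStrictFDerivAt G M u₀)
    (hM : Function.Surjective M) {φ : U} (hφ : M φ = 0) :
    φ ∈ seqTangentCone (G ⁻¹' {G u₀}) u₀ := by
  obtain ⟨C, hC⟩ := hG.exists_eventually_exists_preimage_norm_sub_le hM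
  set t : ℕ → ℝ := fun n => 1 / ((n : ℝ) + 1)
  have ht0 : ∀ n, 0 < t n := fun n => by positivity
  have ht : Tendsto t atTop (𝓝 0) := tendsto_one_div_add_atTop_nhds_zero_nat
  set v : ℕ → U := fun n => u₀ + t n • φ
  have hv : Tendsto v atTop (𝓝 u₀) := by simpa using tendsto_const_nhds.add (ht.smul_const φ)
  obtain ⟨w, hw⟩ := (hv.eventually hC).choice
  have hslope : Tendsto (fun n => (t n)⁻¹ • (G (v n) - G u₀)) atTop (𝓝 0) := by
    have hline : HasDerivAt (fun s : ℝ => G (u₀ + s • φ)) (M φ) 0 := by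
      refine HasFDerivAt.comp_hasDerivAt_of_eq _ hG.hasFDerivAt ?_ (by simp)
      simpa using ((hasDerivAt_id (0 : ℝ)).smul_const φ).const_add u₀
    have ht' : Tendsto t atTop (𝓝[≠] 0) :=
      tendsto_nhdsWithin_iff.2 ⟨ht, .of_forall fun n => (ht0 n).ne'⟩
    simpa [hφ, v, Function.comp_def] using hline.tendsto_slope_zero.comp ht'
  refine ⟨t, w, ht0, ht, hw.mono fun n hn => hn.1, ?_⟩
  have hwv : Tendsto (fun n => (t n)⁻¹ • (w n - v n)) atTop (𝓝 0) := by
    refine squeeze_zero_norm' (hw.mono fun n hn => ?_) (by simpa using hslope.norm.const_mul C)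
    rw [norm_smul, norm_smul, Real.norm_of_nonneg (inv_pos.2 (ht0 n)).le]
    calc (t n)⁻¹ * ‖w n - v n‖ ≤ (t n)⁻¹ * (C * ‖G (v n) - G u₀‖) := by
          gcongr; exact hn.2
      _ = C * ((t n)⁻¹ * ‖G (v n) - G u₀‖) := by ring
  have hsplit : ∀ n, (t n)⁻¹ • (w n - u₀) = (t n)⁻¹ • (w n - v n) + φ := fun n => by
    rw [sub_add_eq_sub_sub, smul_sub (t n)⁻¹ (w n - u₀), smul_smul,
      inv_mul_cancel₀ (ht0 n).ne', one_smul, sub_add_cancel]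
  have h := hwv.add_const φ
  rw [zero_add] at h
  exact h.congr fun n => (hsplit n).symm

end Lyusternik

theorem exists_continuousLinearMap_le_of_nonneg_on {E : Type*} [NormedAddCommGroup E]
    [NormedSpace ℝ E] (p : E → ℝ) (hp_smul : ∀ c : ℝ, 0 < c → ∀ x, p (c • x) = c * p x)
    (hp_add : ∀ x y, p (x + y) ≤ p x + p y) {K : ℝ} (hp_le : ∀ x, p x ≤ K * ‖x‖)
    (S : Submodule ℝ E) (hS : ∀ x ∈ S, 0 ≤ p x) :
    ∃ ℓ : E →L[ℝ] ℝ, (∀ x, ℓ x ≤ p x) ∧ ∀ x ∈ S, ℓ x = 0 := by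
  obtain ⟨g, hgS, hgp⟩ := exists_extension_of_le_sublinear ((0 : E →ₗ[ℝ] ℝ).toPMap S) p
    hp_smul hp_add fun x => show (0 : E →ₗ[ℝ] ℝ) x ≤ p x from hS x x.2
  refine ⟨g.mkContinuous K fun x => abs_le.2 ⟨?_, (hgp x).trans (hp_le x)⟩, hgp,
    fun x hx => by simpa using hgS ⟨x, hx⟩⟩
  have h := (hgp (-x)).trans (hp_le (-x))
  rw [map_neg, norm_neg] at h
  linarith

theorem ContinuousLinearMap.exists_comp_eq_of_ker_le {𝕜 E F W : Type*}
    [NontriviallyNormedField 𝕜] [NormedAddCommGroup E] [NormedSpace 𝕜 E] [CompleteSpace E]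
    [NormedAddCommGroup F] [NormedSpace 𝕜 F] [CompleteSpace F]
    [NormedAddCommGroup W] [NormedSpace 𝕜 W]
    (M : E →L[𝕜] F) (hM : Function.Surjective M) (ℓ : E →L[𝕜] W)
    (h : LinearMap.ker (M : E →ₗ[𝕜] F) ≤ LinearMap.ker (ℓ : E →ₗ[𝕜] W)) :
    ∃ Λ : F →L[𝕜] W, Λ.comp M = ℓ := by
  set M₀ : E →ₗ[𝕜] F := (M : E →ₗ[𝕜] F)
  let Λ : F →ₗ[𝕜] W :=
    (LinearMap.ker M₀).liftQ ℓ h ∘ₗ (M₀.quotKerEquivOfSurjective hM).symm.toLinearMap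
  have hΛ : ∀ x, Λ (M₀ x) = ℓ x := fun x => by
    simp [Λ, LinearMap.quotKerEquivOfSurjective_symm_apply]
  have hcont : Continuous Λ := (M.isQuotientMap hM).continuous_iff.2 <| by
    convert ℓ.continuous using 1
    exact funext hΛ
  exact ⟨⟨Λ, hcont⟩, ContinuousLinearMap.ext hΛ⟩

/-- Lagrange multipliers for equality constraints, non-smooth case:
if `u₀` is a local minimum of the locally Lipschitz `F` subject to `G u = 0`, where `G` is
Fréchet differentiable, `G'(u₀)` is onto, and `G'` is Lipschitz near `u₀`, then there exist
`u* ∈ ∂⁰F(u₀)` and `z₀* ∈ Z*` with `u* + (G'(u₀))* z₀* = 0`, i.e.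
`⟨φ, u*⟩ + ⟨G'(u₀) φ, z₀*⟩ = 0` for all `φ ∈ U`. -/
theorem lagrange_multiplier_eq_nonsmooth
    {U : Type*} [NormedAddCommGroup U] [NormedSpace ℝ U] [CompleteSpace U]
    {Z : Type*} [NormedAddCommGroup Z] [NormedSpace ℝ Z] [CompleteSpace Z]
    (F : U → ℝ) (u₀ : U) (hF : LocallyLipschitzAtPt F u₀)
    (G : U → Z) (G' : U → U →L[ℝ] Z) (hG : ∀ u : U, HasFDerivAt G (G' u) u)
    (hsurj : Function.Surjective (G' u₀))
    (hLip : ∃ α > (0 : ℝ), ∃ K > (0 : ℝ),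
      ∀ φ : U, ‖φ‖ < α → ‖G' (u₀ + φ) - G' u₀‖ ≤ K * ‖φ‖)
    (hG0 : G u₀ = 0)
    (hmin : ∃ δ > (0 : ℝ), ∀ u ∈ ball u₀ δ, G u = 0 → F u₀ ≤ F u) :
    ∃ ustar : U →L[ℝ] ℝ, (∀ φ : U, ustar φ ≤ genDirDeriv F u₀ φ) ∧
      ∃ z₀star : Z →L[ℝ] ℝ,
        ustar + z₀star.comp (G' u₀) = 0 ∧
        ∀ φ : U, ustar φ + z₀star (G' u₀ φ) = 0 := by
  obtain ⟨α, hα, KG, -, hKG⟩ := hLip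
  obtain ⟨δ, hδ, hmin⟩ := hmin
  have hG'cont : ContinuousAt G' u₀ := continuousAt_of_locally_lipschitz hα KG fun u hu => by
    simpa [dist_eq_norm] using hKG (u - u₀) (by rwa [← dist_eq_norm])
  have hstrict : HasStrictFDerivAt G (G' u₀) u₀ :=
    hasStrictFDerivAt_of_hasFDerivAt_of_continuousAt (.of_forall hG) hG'cont
  have hlocmin : IsLocalMinOn F (G ⁻¹' {G u₀}) u₀ :=
    Filter.mem_of_superset (inter_mem_nhdsWithin _ (ball_mem_nhds u₀ hδ))
      fun u ⟨hGu, hu⟩ => hmin u hu (hG0 ▸ hGu)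
  have hker : ∀ φ ∈ LinearMap.ker (G' u₀ : U →ₗ[ℝ] Z), 0 ≤ genDirDeriv F u₀ φ := fun φ hφ =>
    hF.genDirDeriv_nonneg_of_isLocalMinOn hlocmin (hstrict.mem_seqTangentCone_preimage hsurj hφ)
  obtain ⟨K, hK⟩ := hF.exists_genDirDeriv_le
  obtain ⟨ℓ, hℓH, hℓker⟩ := exists_continuousLinearMap_le_of_nonneg_on (genDirDeriv F u₀)
    (fun _ hc φ => hF.genDirDeriv_smul hc φ) hF.genDirDeriv_add_le hK _ hker
  obtain ⟨Λ, hΛ⟩ := (G' u₀).exists_comp_eq_of_ker_le hsurj ℓ hℓker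
  have hsum : ∀ φ, ℓ φ + (-Λ) (G' u₀ φ) = 0 := fun φ => by
    rw [neg_apply, ← ContinuousLinearMap.comp_apply, hΛ, add_neg_cancel]
  exact ⟨ℓ, hℓH, -Λ, ContinuousLinearMap.ext hsum, hsum⟩
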